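/- arXiv:2401.00082 — 2 statements merged into one kernel-verified Lean document; each statement's English description precedes it below -/
import Mathlib

section
/- Let (Ω, F, P) be a probability space and, for each n ∈ ℕ, let X^n_1, …, X^n_n be square-integrable real-valued random variables on Ω with common mean E[X^n_i] = m for all i and n. Suppose there are nonnegative reals f(n, k), for n ∈ ℕ and 0 ≤ k ≤ n, such that: (i) |Cov(X^n_i, X^n_j)| ≤ f(n, |i − j|) for all 1 ≤ i, j ≤ n; (ii) sup_{n, 0 ≤ k ≤ n} f(n, k) < ∞; and (iii) (1/n) ∑_{k=1}^{n} f(n, k) → 0 as n → ∞. Then the normalized partial sums S_n = (1/n) ∑_{i=1}^n X^n_i converge to m in probability, i.e., for every ε > 0, P(|S_n − m| > ε) → 0 as n → ∞. -/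
open MeasureTheory Finset Filter

noncomputable def cov {Ω : Type*} [MeasurableSpace Ω] (P : Measure Ω) (X Y : Ω → ℝ) : ℝ :=
  ∫ ω, (X ω - ∫ ω', X ω' ∂P) * (Y ω - ∫ ω', Y ω' ∂P) ∂P

/-!
By Chebyshev's inequality it suffices that `Var(S_n) → 0`. Expanding the variance of the sum
into covariances and grouping the pairs `(i, j)` by their lag `|i - j|`, each row `i` meets
lag `0` once and every other lag at most twice, so
`Var(S_n) ≤ f(n,0)/n + (2/n) ∑_{k=1}^n f(n,k)`. The first term vanishes because `f` is
bounded, the second by the decay hypothesis.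
-/

open ProbabilityTheory Topology

theorem sum_comp_le_sum_of_injOn {ι κ M : Type*} [AddCommMonoid M] [PartialOrder M]
    [IsOrderedAddMonoid M] {s : Finset ι} {t : Finset κ} {e : ι → κ} {g : κ → M}
    (he : Set.InjOn e s) (hest : Set.MapsTo e s t) (hg : ∀ y ∈ t, 0 ≤ g y) :
    ∑ x ∈ s, g (e x) ≤ ∑ y ∈ t, g y := by
  classical
  rw [← sum_image he]
  exact sum_le_sum_of_subset_of_nonneg (image_subset_iff.2 hest) fun y hy _ => hg y hy

theorem sum_range_natAbs_sub_le {n i : ℕ} (hi : i ≤ n) {g : ℕ → ℝ} (hg : ∀ k ≤ n, 0 ≤ g k) :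
    ∑ j ∈ range n, g ((i : ℤ) - j).natAbs ≤ g 0 + 2 * ∑ k ∈ Icc 1 n, g k := by
  rw [← sum_filter_add_sum_filter_not _ (· ≤ i)]
  have below : ∑ j ∈ range n with j ≤ i, g ((i : ℤ) - j).natAbs ≤ ∑ k ∈ Icc 0 n, g k := by
    refine le_of_eq_of_le (sum_congr rfl fun (j : ℕ) hj => congrArg g ?_)
      (sum_comp_le_sum_of_injOn (e := (i - ·)) (fun j hj j' hj' h => ?_) (fun j hj => ?_)
        fun k hk => ?_)
    all_goals simp_all <;> omega
  have above : ∑ j ∈ range n with ¬j ≤ i, g ((i : ℤ) - j).natAbs ≤ ∑ k ∈ Icc 1 n, g k := by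
    refine le_of_eq_of_le (sum_congr rfl fun (j : ℕ) hj => congrArg g ?_)
      (sum_comp_le_sum_of_injOn (e := (· - i)) (fun j hj j' hj' h => ?_) (fun j hj => ?_)
        fun k hk => ?_)
    all_goals simp_all <;> omega
  rw [← add_sum_Ioc_eq_sum_Icc (Nat.zero_le n), ← Icc_add_one_left_eq_Ioc, zero_add] at below
  linarith

section Average

variable {Ω : Type*} [MeasurableSpace Ω] {μ : Measure Ω} {n : ℕ} {X : Fin n → Ω → ℝ}

theorem variance_sum_le_of_abs_covariance_le [IsFiniteMeasure μ] (hX : ∀ i, MemLp (X i) 2 μ)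
    {g : ℕ → ℝ} (hg : ∀ k ≤ n, 0 ≤ g k)
    (hcov : ∀ i j : Fin n, |cov[X i, X j; μ]| ≤ g ((i : ℤ) - j).natAbs) :
    Var[fun ω => ∑ i, X i ω; μ] ≤ n * (g 0 + 2 * ∑ k ∈ Icc 1 n, g k) := by
  rw [variance_fun_sum hX]
  calc ∑ i, ∑ j, cov[X i, X j; μ] ≤ ∑ i : Fin n, ∑ j : Fin n, g ((i : ℤ) - j).natAbs :=
        sum_le_sum fun i _ => sum_le_sum fun j _ => (le_abs_self _).trans (hcov i j)
    _ ≤ ∑ _i : Fin n, (g 0 + 2 * ∑ k ∈ Icc 1 n, g k) := sum_le_sum fun i _ => by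
        rw [Fin.sum_univ_eq_sum_range (fun j => g ((i : ℤ) - j).natAbs)]
        exact sum_range_natAbs_sub_le i.isLt.le hg
    _ = n * (g 0 + 2 * ∑ k ∈ Icc 1 n, g k) := by simp [mul_add]

theorem variance_average_le_of_abs_covariance_le [IsFiniteMeasure μ] (hX : ∀ i, MemLp (X i) 2 μ)
    {g : ℕ → ℝ} (hg : ∀ k ≤ n, 0 ≤ g k)
    (hcov : ∀ i j : Fin n, |cov[X i, X j; μ]| ≤ g ((i : ℤ) - j).natAbs) :
    Var[fun ω => (1 / n : ℝ) * ∑ i, X i ω; μ]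
      ≤ g 0 / n + 2 * ((1 / n : ℝ) * ∑ k ∈ Icc 1 n, g k) := by
  rw [variance_const_mul]
  calc (1 / n : ℝ) ^ 2 * Var[fun ω => ∑ i, X i ω; μ]
      ≤ (1 / n : ℝ) ^ 2 * (n * (g 0 + 2 * ∑ k ∈ Icc 1 n, g k)) := by
        gcongr
        exact variance_sum_le_of_abs_covariance_le hX hg hcov
    _ = g 0 / n + 2 * ((1 / n : ℝ) * ∑ k ∈ Icc 1 n, g k) := by
        rcases n.eq_zero_or_pos with rfl | hn
        · simp
        · field_simp

theorem memLp_average (hX : ∀ i, MemLp (X i) 2 μ) :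
    MemLp (fun ω => (1 / n : ℝ) * ∑ i, X i ω) 2 μ :=
  (memLp_finsetSum univ fun i _ => hX i).const_mul _

theorem integral_average_of_integral_eq [IsProbabilityMeasure μ] (hn : n ≠ 0)
    (hX : ∀ i, Integrable (X i) μ) {m : ℝ} (hm : ∀ i, μ[X i] = m) :
    μ[fun ω => (1 / n : ℝ) * ∑ i, X i ω] = m := by
  rw [integral_const_mul, integral_finsetSum _ fun i _ => hX i]
  simp [hm]
  field_simp

end Average

theorem measure_lt_abs_sub_le_variance_div_sq {Ω : Type*} [MeasurableSpace Ω] {μ : Measure Ω}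
    [IsFiniteMeasure μ] {Y : Ω → ℝ} (hY : MemLp Y 2 μ) {m : ℝ} (hm : μ[Y] = m) {ε : ℝ}
    (hε : 0 < ε) : μ {ω | ε < |Y ω - m|} ≤ ENNReal.ofReal (Var[Y; μ] / ε ^ 2) := by
  subst hm
  exact (measure_mono fun ω (hω : ε < _) => hω.le).trans (meas_ge_le_variance_div_sq hY hε)

/-- Weak law of large numbers for a triangular array of square-integrable random
variables with common mean exhibiting asymptotic correlation decay. -/
theorem wlln_triangular_array_correlation_decay
    {Ω : Type*} [MeasurableSpace Ω] (P : Measure Ω) [IsProbabilityMeasure P]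
    (m : ℝ) (X : (n : ℕ) → Fin n → Ω → ℝ)
    (hX : ∀ n i, MemLp (X n i) 2 P)
    (hmean : ∀ n i, ∫ ω, X n i ω ∂P = m)
    (f : ℕ → ℕ → ℝ)
    (hf_nonneg : ∀ n k, k ≤ n → 0 ≤ f n k)
    (hcov : ∀ n (i j : Fin n), |cov P (X n i) (X n j)| ≤ f n ((i : ℤ) - (j : ℤ)).natAbs)
    (hsup : ∃ M : ℝ, ∀ n k, k ≤ n → f n k ≤ M)
    (hdecay : Tendsto (fun n : ℕ => (1 / n : ℝ) * ∑ k ∈ Finset.Icc 1 n, f n k)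
      atTop (nhds 0)) :
    ∀ ε : ℝ, 0 < ε →
      Tendsto (fun n : ℕ => P {ω | ε < |(1 / n : ℝ) * ∑ i, X n i ω - m|})
        atTop (nhds 0) := by
  intro ε hε
  obtain ⟨M, hM⟩ := hsup
  have hdiag : Tendsto (fun n : ℕ => f n 0 / n) atTop (𝓝 0) :=
    squeeze_zero (fun n => div_nonneg (hf_nonneg n 0 n.zero_le) n.cast_nonneg)
      (fun n => div_le_div_of_nonneg_right (hM n 0 n.zero_le) n.cast_nonneg)
      (tendsto_const_div_atTop_nhds_zero_nat M)
  have hbound := ENNReal.tendsto_ofReal ((hdiag.add (hdecay.const_mul 2)).div_const (ε ^ 2))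
  rw [zero_add, mul_zero, zero_div, ENNReal.ofReal_zero] at hbound
  refine tendsto_of_tendsto_of_tendsto_of_le_of_le' tendsto_const_nhds hbound
    (.of_forall fun n => zero_le) (eventually_atTop.2 ⟨1, fun n hn => ?_⟩)
  refine (measure_lt_abs_sub_le_variance_div_sq (memLp_average (hX n))
    (integral_average_of_integral_eq (by omega) (fun i => (hX n i).integrable one_le_two)
      (hmean n)) hε).trans (ENNReal.ofReal_le_ofReal ?_)
  -- `cov P X Y` unfolds to Mathlib's `cov[X, Y; P]`.
  exact div_le_div_of_nonneg_right
    (variance_average_le_of_abs_covariance_le (hX n) (hf_nonneg n) (hcov n)) (sq_nonneg ε)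
end

section
/- Let E be a Polish space (a separable, completely metrizable topological space) equipped with its Borel σ-algebra, and let μ be a Borel probability measure on E. For each n ∈ ℕ, let (X^n_1, …, X^n_n) be an exchangeable E-valued random vector, i.e., for every permutation σ of {1, …, n}, the vector (X^n_{σ(1)}, …, X^n_{σ(n)}) has the same law as (X^n_1, …, X^n_n). Then the following are equivalent: (a) chaoticity: for every k ∈ ℕ and all bounded continuous functions f_1, …, f_k : E → ℝ, E[f_1(X^n_1) ⋯ f_k(X^n_k)] → ∏_{i=1}^k ∫_E f_i dμ as n → ∞; (b) the random empirical measures μ^n = (1/n) ∑_{i=1}^n δ_{X^n_i}, viewed as random elements of the space P(E) of Borel probability measures on E with the topology of weak convergence, converge in distribution to the deterministic limit μ, i.e., for every bounded continuous function Φ : P(E) → ℝ, E[Φ(μ^n)] → Φ(μ) as n → ∞. -/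
/-!
Expanding the product, `∏ i, ∫ f i dμⁿ` is the average of `∏ i, f i (X (φ i))` over all maps
`φ : Fin k → Fin (n + 1)`. By exchangeability every injective `φ` contributes the same
expectation `E ∏ i, f i (X i)`, and injective maps form the fraction
`(n + 1).descFactorial k / (n + 1) ^ k → 1` of all maps. Hence chaoticity is equivalent to
`E ∏ i, ∫ f i dμⁿ → ∏ i, ∫ f i dμ` for all `k` and `f`, which follows from (b) because
`ν ↦ ∏ i, ∫ f i dν` is bounded and continuous. Conversely, the cases `k = 1, 2` give
`E (∫ g dμⁿ - ∫ g dμ)² → 0`, so `∫ g dμⁿ → ∫ g dμ` in probability for every `g`. The weak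
topology is generated by the maps `ν ↦ ∫ g dν`, so `μⁿ → μ` in probability, and bounded
convergence in probability gives (b).
-/

open MeasureTheory Filter
open scoped ENNReal NNReal

/-- The empirical measure `(1/(n+1)) ∑_{i} δ_{x i}` of `n + 1` points of `E`, as a
Borel probability measure on `E`. -/
noncomputable def empiricalMeasure {E : Type*} [MeasurableSpace E] {n : ℕ}
    (x : Fin (n + 1) → E) : ProbabilityMeasure E :=
  ⟨((n : ℝ≥0∞) + 1)⁻¹ • ∑ i, Measure.dirac (x i), by
    refine ⟨?_⟩
    have h : ((∑ i : Fin (n + 1), Measure.dirac (x i)) Set.univ) = (n : ℝ≥0∞) + 1 := by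
      simp [Measure.finset_sum_apply]
    rw [Measure.smul_apply, h, smul_eq_mul]
    exact ENNReal.inv_mul_cancel (by simp) (by simp)⟩

open scoped Topology BoundedContinuousFunction

section EmpiricalMeasure

variable {E : Type*} [TopologicalSpace E] [MeasurableSpace E] [OpensMeasurableSpace E]

lemma integral_empiricalMeasure {n : ℕ} (f : E →ᵇ ℝ) (x : Fin (n + 1) → E) :
    ∫ y, f y ∂(empiricalMeasure x : Measure E) = (∑ i, f (x i)) / (n + 1) := by
  change ∫ y, f y ∂(((n : ℝ≥0∞) + 1)⁻¹ • ∑ i, Measure.dirac (x i)) = _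
  rw [integral_smul_measure, integral_finsetSum_measure fun i _ => f.integrable _]
  simp only [integral_dirac' _ _ f.continuous.stronglyMeasurable, smul_eq_mul]
  rw [ENNReal.toReal_inv, div_eq_inv_mul]
  norm_cast

lemma continuous_empiricalMeasure {n : ℕ} :
    Continuous (empiricalMeasure : (Fin (n + 1) → E) → ProbabilityMeasure E) :=
  ProbabilityMeasure.continuous_iff_forall_continuous_integral.2 fun f => by
    simp_rw [integral_empiricalMeasure]
    fun_prop

lemma prod_integral_empiricalMeasure {k n : ℕ} (f : Fin k → E →ᵇ ℝ) (x : Fin (n + 1) → E) :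
    ∏ i, ∫ y, f i y ∂(empiricalMeasure x : Measure E) =
      (∑ φ : Fin k → Fin (n + 1), ∏ i, f i (x (φ i))) / (n + 1) ^ k := by
  simp_rw [integral_empiricalMeasure, Finset.prod_div_distrib, Fintype.prod_sum,
    Finset.prod_const, Finset.card_univ, Fintype.card_fin]

-- Second countability makes the Borel σ-algebra of `Fin (n + 1) → E` the product one.
lemma Continuous.measurable_comp_empiricalMeasure [SecondCountableTopology E]
    {Ω : Type*} [MeasurableSpace Ω] {n : ℕ} {Φ : ProbabilityMeasure E → ℝ} (hΦ : Continuous Φ)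
    {Y : Fin (n + 1) → Ω → E} (hY : ∀ i, Measurable (Y i)) :
    Measurable fun ω => Φ (empiricalMeasure fun i => Y i ω) :=
  (hΦ.comp continuous_empiricalMeasure).measurable.comp (measurable_pi_lambda _ hY)

end EmpiricalMeasure

lemma abs_sum_div_card_sub_le {α : Type*} [Fintype α] (p : α → Prop) [DecidablePred p]
    {F : α → ℝ} {B C : ℝ} (hF : ∀ a, |F a| ≤ C) (hFB : ∀ a, p a → F a = B) (hB : |B| ≤ C) :
    |(∑ a, F a) / Fintype.card α - B| ≤
      2 * C * (1 - (Finset.univ.filter p).card / Fintype.card α) := by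
  obtain hα | hα := Nat.eq_zero_or_pos (Fintype.card α)
  · simp only [hα, Nat.cast_zero, div_zero, zero_sub, abs_neg, sub_zero, mul_one]
    linarith [abs_nonneg B]
  have hcard : (0 : ℝ) < Fintype.card α := by exact_mod_cast hα
  have hsum : |∑ a, F a - Fintype.card α * B| ≤
      2 * C * (Fintype.card α - (Finset.univ.filter p).card) :=
    calc |∑ a, F a - Fintype.card α * B|
        = |∑ a ∈ Finset.univ.filter (¬ p ·), (F a - B)| := by
          rw [Finset.sum_filter_of_ne (p := (¬ p ·))
              fun a _ h ha => h (by rw [hFB a ha, sub_self]), Finset.sum_sub_distrib,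
            Finset.sum_const, Finset.card_univ, nsmul_eq_mul]
      _ ≤ ∑ a ∈ Finset.univ.filter (¬ p ·), 2 * C :=
          (Finset.abs_sum_le_sum_abs _ _).trans <| Finset.sum_le_sum fun a _ =>
            (abs_sub _ _).trans (by linarith [hF a])
      _ = 2 * C * (Fintype.card α - (Finset.univ.filter p).card) := by
          rw [Finset.sum_const, nsmul_eq_mul, ← Finset.card_univ,
            ← Finset.card_filter_add_card_filter_not (s := Finset.univ) p]
          push_cast
          ring
  rw [div_sub' hcard.ne', abs_div, abs_of_pos hcard, div_le_iff₀ hcard]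
  calc _ ≤ 2 * C * (Fintype.card α - (Finset.univ.filter p).card) := by
        simpa [mul_comm] using hsum
    _ = _ := by field_simp

lemma card_filter_injective (α β : Type*) [Fintype α] [Fintype β] [DecidableEq α]
    [DecidableEq β] [DecidablePred (Function.Injective : (α → β) → Prop)] :
    (Finset.univ.filter (Function.Injective : (α → β) → Prop)).card =
      (Fintype.card β).descFactorial (Fintype.card α) := by
  rw [← Fintype.card_subtype, Fintype.card_congr (Equiv.subtypeInjectiveEquivEmbedding _ _),
    Fintype.card_embedding_eq]

lemma tendsto_descFactorial_div_pow (k : ℕ) :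
    Tendsto (fun m : ℕ => (m.descFactorial k : ℝ) / m ^ k) atTop (𝓝 1) :=
  (Asymptotics.isEquivalent_iff_tendsto_one (eventually_atTop.2 ⟨1, fun m _ => by
    positivity⟩)).1 (isEquivalent_descFactorial k)

section Exchangeable

variable {Ω ι E : Type*} [MeasurableSpace Ω] [MeasurableSpace E]

def Exchangeable (P : Measure Ω) (Y : ι → Ω → E) : Prop :=
  ∀ σ : Equiv.Perm ι, P.map (fun ω i => Y (σ i) ω) = P.map (fun ω i => Y i ω)

variable {P : Measure Ω} {Y : ι → Ω → E}

lemma Exchangeable.map_comp_eq {α : Type*} [Finite α] (hexch : Exchangeable P Y)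
    (hY : ∀ i, Measurable (Y i)) {φ ψ : α → ι} (hφ : Function.Injective φ)
    (hψ : Function.Injective ψ) :
    P.map (fun ω a => Y (φ a) ω) = P.map (fun ω a => Y (ψ a) ω) := by
  obtain ⟨σ, hσ⟩ := Equiv.Perm.exists_extending_pair ψ φ hψ hφ
  have hrestrict : Measurable fun (y : ι → E) (a : α) => y (ψ a) :=
    measurable_pi_lambda _ fun a => measurable_pi_apply _
  calc P.map (fun ω a => Y (φ a) ω)
      = (P.map fun ω i => Y (σ i) ω).map fun y a => y (ψ a) := by
        rw [Measure.map_map hrestrict (measurable_pi_lambda _ fun i => hY _)]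
        simp_rw [Function.comp_def, hσ]
    _ = (P.map fun ω i => Y i ω).map fun y a => y (ψ a) := by rw [hexch σ]
    _ = P.map (fun ω a => Y (ψ a) ω) := by
        rw [Measure.map_map hrestrict (measurable_pi_lambda _ hY)]
        rfl

variable [TopologicalSpace E] [OpensMeasurableSpace E]

lemma Exchangeable.integral_prod_comp_eq {k : ℕ} (hexch : Exchangeable P Y)
    (hY : ∀ i, Measurable (Y i)) (f : Fin k → E →ᵇ ℝ) {φ ψ : Fin k → ι}
    (hφ : Function.Injective φ) (hψ : Function.Injective ψ) :
    ∫ ω, ∏ a, f a (Y (φ a) ω) ∂P = ∫ ω, ∏ a, f a (Y (ψ a) ω) ∂P := by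
  have hG : Measurable fun y : Fin k → E => ∏ a, f a (y a) :=
    Finset.measurable_prod _ fun a _ => (f a).continuous.measurable.comp (measurable_pi_apply a)
  have hmap : ∀ φ : Fin k → ι, ∫ ω, ∏ a, f a (Y (φ a) ω) ∂P =
      ∫ y, ∏ a, f a (y a) ∂(P.map fun ω a => Y (φ a) ω) := fun φ =>
    (integral_map (measurable_pi_lambda _ fun a => hY (φ a)).aemeasurable
      hG.aestronglyMeasurable).symm
  rw [hmap, hmap, hexch.map_comp_eq hY hφ hψ]

end Exchangeable

section ExchangeableEmpirical

variable {Ω E : Type*} [MeasurableSpace Ω] {P : Measure Ω} [IsProbabilityMeasure P]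
  [TopologicalSpace E] [MeasurableSpace E] [OpensMeasurableSpace E]

lemma Exchangeable.abs_integral_prod_integral_empiricalMeasure_sub_le {k m : ℕ}
    {Y : Fin (m + 1) → Ω → E} (hexch : Exchangeable P Y) (hY : ∀ i, Measurable (Y i))
    (f : Fin k → E →ᵇ ℝ) {φ₀ : Fin k → Fin (m + 1)} (hφ₀ : Function.Injective φ₀) :
    |∫ ω, ∏ i, ∫ x, f i x ∂(empiricalMeasure (fun j => Y j ω) : Measure E) ∂P -
        ∫ ω, ∏ i, f i (Y (φ₀ i) ω) ∂P| ≤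
      2 * (∏ i, ‖f i‖) * (1 - ((m + 1).descFactorial k : ℝ) / (m + 1) ^ k) := by
  classical
  set F : (Fin k → Fin (m + 1)) → ℝ := fun φ => ∫ ω, ∏ i, f i (Y (φ i) ω) ∂P
  have hF_meas : ∀ φ : Fin k → Fin (m + 1), Measurable fun ω => ∏ i, f i (Y (φ i) ω) :=
    fun φ => Finset.measurable_prod _ fun i _ => (f i).continuous.measurable.comp (hY _)
  have hF_le : ∀ (φ : Fin k → Fin (m + 1)) ω, ‖∏ i, f i (Y (φ i) ω)‖ ≤ ∏ i, ‖f i‖ :=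
    fun φ ω => (norm_prod _ _).trans_le <| Finset.prod_le_prod
      (fun _ _ => norm_nonneg _) fun i _ => (f i).norm_coe_le_norm _
  have hF_bound : ∀ φ, |F φ| ≤ ∏ i, ‖f i‖ := fun φ => by
    simpa using norm_integral_le_of_norm_le_const (μ := P) (ae_of_all _ (hF_le φ))
  have hexpand : ∫ ω, ∏ i, ∫ x, f i x ∂(empiricalMeasure (fun j => Y j ω) : Measure E) ∂P =
      (∑ φ, F φ) / Fintype.card (Fin k → Fin (m + 1)) := by
    simp_rw [prod_integral_empiricalMeasure]
    rw [integral_div, integral_finsetSum _ fun φ _ =>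
      Integrable.of_bound (hF_meas φ).aestronglyMeasurable _ (ae_of_all _ (hF_le φ))]
    simp [F]
  rw [hexpand]
  convert abs_sum_div_card_sub_le Function.Injective (fun φ => hF_bound φ)
    (fun φ hφ => hexch.integral_prod_comp_eq hY f hφ hφ₀) (hF_bound φ₀) using 4
  · rw [card_filter_injective, Fintype.card_fin, Fintype.card_fin]
  · simp

lemma Exchangeable.tendsto_integral_prod_integral_empiricalMeasure_sub {k : ℕ}
    {X : (n : ℕ) → Fin (n + 1) → Ω → E} (hexch : ∀ n, Exchangeable P (X n))
    (hX : ∀ n i, Measurable (X n i)) (f : Fin k → E →ᵇ ℝ) {φ : ∀ n, Fin k → Fin (k + n + 1)}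
    (hφ : ∀ n, Function.Injective (φ n)) :
    Tendsto (fun n : ℕ =>
        ∫ ω, ∏ i, ∫ x, f i x ∂(empiricalMeasure (fun j => X (k + n) j ω) : Measure E) ∂P -
          ∫ ω, ∏ i, f i (X (k + n) (φ n i) ω) ∂P)
      atTop (𝓝 0) := by
  have hbound : Tendsto (fun n : ℕ => 2 * (∏ i, ‖f i‖) *
      (1 - ((k + n + 1).descFactorial k : ℝ) / ((k + n : ℕ) + 1) ^ k)) atTop (𝓝 0) := by
    have h := ((tendsto_descFactorial_div_pow k).comp (tendsto_add_atTop_nat (k + 1))).const_sub 1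
      |>.const_mul (2 * ∏ i, ‖f i‖)
    rw [sub_self, mul_zero] at h
    refine h.congr fun n => ?_
    rw [Function.comp_apply, show n + (k + 1) = k + n + 1 by omega]
    push_cast
    rfl
  exact squeeze_zero_norm (fun n =>
    (hexch (k + n)).abs_integral_prod_integral_empiricalMeasure_sub_le (hX _) f (hφ n)) hbound

lemma Exchangeable.tendsto_integral_prod_iff_tendsto_integral_prod_integral_empiricalMeasure
    {k : ℕ} {X : (n : ℕ) → Fin (n + 1) → Ω → E} (hexch : ∀ n, Exchangeable P (X n))
    (hX : ∀ n i, Measurable (X n i)) (f : Fin k → E →ᵇ ℝ) {φ : ∀ n, Fin k → Fin (k + n + 1)}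
    (hφ : ∀ n, Function.Injective (φ n)) (L : ℝ) :
    Tendsto (fun n : ℕ => ∫ ω, ∏ i, f i (X (k + n) (φ n i) ω) ∂P) atTop (𝓝 L) ↔
      Tendsto (fun n : ℕ =>
        ∫ ω, ∏ i, ∫ x, f i x ∂(empiricalMeasure (fun j => X n j ω) : Measure E) ∂P)
        atTop (𝓝 L) := by
  set u : ℕ → ℝ := fun n =>
    ∫ ω, ∏ i, ∫ x, f i x ∂(empiricalMeasure (fun j => X n j ω) : Measure E) ∂P
  have hdiff : Tendsto (fun n => u (k + n) - ∫ ω, ∏ i, f i (X (k + n) (φ n i) ω) ∂P)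
      atTop (𝓝 0) :=
    Exchangeable.tendsto_integral_prod_integral_empiricalMeasure_sub hexch hX f hφ
  have hshift : Tendsto u atTop (𝓝 L) ↔ Tendsto (fun n => u (k + n)) atTop (𝓝 L) := by
    simp_rw [add_comm k]
    exact (tendsto_add_atTop_iff_nat k).symm
  rw [hshift]
  exact ⟨fun h => by simpa using h.add hdiff, fun h => by simpa using h.sub hdiff⟩

end ExchangeableEmpirical

section ConvergenceInProbability

variable {Ω ι : Type*} [MeasurableSpace Ω] {P : Measure Ω} [IsProbabilityMeasure P]
  {l : Filter ι}

lemma tendstoInMeasure_const_of_tendsto_moments {Z : ι → Ω → ℝ} {c : ℝ}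
    (hZ : ∀ i, MemLp (Z i) 2 P) (h1 : Tendsto (fun i => ∫ ω, Z i ω ∂P) l (𝓝 c))
    (h2 : Tendsto (fun i => ∫ ω, Z i ω ^ 2 ∂P) l (𝓝 (c ^ 2))) :
    TendstoInMeasure P Z l fun _ => c := by
  have hint : ∀ i, Integrable (fun ω => (Z i ω - c) ^ 2) P :=
    fun i => ((hZ i).sub (memLp_const c)).integrable_sq
  have hexpand : ∀ i, ∫ ω, (Z i ω - c) ^ 2 ∂P =
      ∫ ω, Z i ω ^ 2 ∂P - 2 * c * ∫ ω, Z i ω ∂P + c ^ 2 := fun i => by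
    have hZ1 := (hZ i).integrable one_le_two
    have hZ2 := (hZ i).integrable_sq
    calc ∫ ω, (Z i ω - c) ^ 2 ∂P = ∫ ω, (Z i ω ^ 2 - 2 * c * Z i ω + c ^ 2) ∂P := by
          congr 1
          ext ω
          ring
      _ = _ := by
          rw [integral_add (by fun_prop) (by fun_prop), integral_sub hZ2 (by fun_prop),
            integral_const_mul, integral_const]
          simp
  have hsq : Tendsto (fun i => ∫ ω, (Z i ω - c) ^ 2 ∂P) l (𝓝 0) := by
    simp_rw [hexpand]
    convert (h2.sub (h1.const_mul (2 * c))).add_const (c ^ 2) using 2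
    ring
  rw [tendstoInMeasure_iff_measureReal_dist]
  intro ε hε
  have hmarkov : ∀ i, P.real {ω | ε ≤ dist (Z i ω) c} ≤ (∫ ω, (Z i ω - c) ^ 2 ∂P) / ε ^ 2 :=
    fun i => by
      rw [le_div_iff₀ (by positivity), mul_comm]
      refine le_trans ?_ (mul_meas_ge_le_integral_of_nonneg
        (ae_of_all _ fun ω => sq_nonneg (Z i ω - c)) (hint i) (ε ^ 2))
      refine mul_le_mul_of_nonneg_left (measureReal_mono fun ω hω => ?_) (sq_nonneg ε)
      rw [Set.mem_ofPred_eq, Real.dist_eq] at hω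
      rw [Set.mem_ofPred_eq, ← sq_abs (Z i ω - c)]
      exact pow_le_pow_left₀ hε.le hω 2
  exact squeeze_zero (fun _ => measureReal_nonneg) hmarkov (by simpa using hsq.div_const (ε ^ 2))

lemma tendsto_integral_of_tendstoInMeasure_of_bound {Z : ℕ → Ω → ℝ} {c C : ℝ}
    (hZ : ∀ n, AEStronglyMeasurable (Z n) P) (hC : ∀ n ω, |Z n ω| ≤ C)
    (h : TendstoInMeasure P Z atTop fun _ => c) :
    Tendsto (fun n => ∫ ω, Z n ω ∂P) atTop (𝓝 c) := by
  have hui : UnifIntegrable Z 1 P := unifIntegrable_of le_rfl ENNReal.one_ne_top hZ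
    fun ε _ => ⟨C.toNNReal + 1, fun n => by
      have hempty : {ω | C.toNNReal + 1 ≤ ‖Z n ω‖₊} = ∅ :=
        Set.eq_empty_of_forall_notMem fun ω hω => by
          have := NNReal.coe_le_coe.2 hω
          push_cast [Real.coe_toNNReal', Real.norm_eq_abs] at this
          linarith [hC n ω, le_max_left C 0]
      simp [hempty]⟩
  have hL1 := tendsto_Lp_finite_of_tendstoInMeasure le_rfl ENNReal.one_ne_top hZ
    (memLp_const c) hui h
  simpa using tendsto_integral_of_L1' (fun _ => c) aestronglyMeasurable_const
    (Eventually.of_forall fun n => Integrable.of_bound (hZ n) C (ae_of_all _ (hC n))) hL1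

end ConvergenceInProbability

section RandomMeasures

variable {E : Type*} [TopologicalSpace E] [MeasurableSpace E] [OpensMeasurableSpace E]

lemma ProbabilityMeasure.nhds_eq_iInf_comap_integral (μ : ProbabilityMeasure E) :
    𝓝 μ = ⨅ g : E →ᵇ ℝ, comap (fun ν : ProbabilityMeasure E => ∫ x, g x ∂(ν : Measure E))
      (𝓝 (∫ x, g x ∂(μ : Measure E))) :=
  le_antisymm
    (le_iInf fun g =>
      ((ProbabilityMeasure.continuous_integral_boundedContinuousFunction g).tendsto μ).le_comap)
    (ProbabilityMeasure.tendsto_iff_forall_integral_tendsto.2 fun g =>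
      tendsto_iInf' g tendsto_comap)

variable {Ω ι : Type*} [MeasurableSpace Ω] {P : Measure Ω} {l : Filter ι}

lemma tendstoInMeasure_comp_of_forall_tendstoInMeasure_integral {F : Type*}
    [PseudoMetricSpace F] {ν : ι → Ω → ProbabilityMeasure E} {μ : ProbabilityMeasure E}
    (h : ∀ g : E →ᵇ ℝ, TendstoInMeasure P (fun i ω => ∫ x, g x ∂(ν i ω : Measure E)) l
      fun _ => ∫ x, g x ∂(μ : Measure E))
    {Φ : ProbabilityMeasure E → F} (hΦ : ContinuousAt Φ μ) :
    TendstoInMeasure P (fun i ω => Φ (ν i ω)) l fun _ => Φ μ := by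
  rw [tendstoInMeasure_iff_dist]
  intro ε hε
  have hbasis := ProbabilityMeasure.nhds_eq_iInf_comap_integral μ ▸
    HasBasis.iInf' fun g : E →ᵇ ℝ => Metric.nhds_basis_ball.comap _
  obtain ⟨⟨I, δ⟩, ⟨hI, hδ⟩, hsub⟩ := hbasis.mem_iff.1 (hΦ (Metric.ball_mem_nhds _ hε))
  have hcover : ∀ i, {ω | ε ≤ dist (Φ (ν i ω)) (Φ μ)} ⊆
      ⋃ g ∈ hI.toFinset, {ω | δ g ≤ dist (∫ x, g x ∂(ν i ω : Measure E))
        (∫ x, g x ∂(μ : Measure E))} := fun i ω hω => by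
    by_contra hω'
    simp only [Set.mem_iUnion, Set.mem_ofPred_eq, Set.Finite.mem_toFinset, not_exists,
      not_le] at hω'
    have hmem := hsub (Set.mem_iInter₂.2 fun g hg => hω' g hg)
    exact (not_le.2 (Metric.mem_ball.1 hmem)) hω
  have hsum := tendsto_finsetSum hI.toFinset fun g hg =>
    tendstoInMeasure_iff_dist.1 (h g) (δ g) (hδ g (hI.mem_toFinset.1 hg))
  rw [Finset.sum_const_zero] at hsum
  exact tendsto_of_tendsto_of_tendsto_of_le_of_le tendsto_const_nhds hsum
    (fun _ => zero_le) fun i => (measure_mono (hcover i)).trans (measure_biUnion_finset_le _ _)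

theorem tendsto_integral_comp_of_forall_tendstoInMeasure_integral [IsProbabilityMeasure P]
    {ν : ℕ → Ω → ProbabilityMeasure E} {μ : ProbabilityMeasure E}
    (h : ∀ g : E →ᵇ ℝ, TendstoInMeasure P (fun n ω => ∫ x, g x ∂(ν n ω : Measure E)) atTop
      fun _ => ∫ x, g x ∂(μ : Measure E))
    (Φ : ProbabilityMeasure E →ᵇ ℝ) (hΦ : ∀ n, AEStronglyMeasurable (fun ω => Φ (ν n ω)) P) :
    Tendsto (fun n => ∫ ω, Φ (ν n ω) ∂P) atTop (𝓝 (Φ μ)) :=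
  tendsto_integral_of_tendstoInMeasure_of_bound hΦ (fun _ _ => Φ.norm_coe_le_norm _)
    (tendstoInMeasure_comp_of_forall_tendstoInMeasure_integral h Φ.continuous.continuousAt)

noncomputable def prodIntegral {k : ℕ} (f : Fin k → E →ᵇ ℝ) : ProbabilityMeasure E →ᵇ ℝ :=
  .ofNormedAddCommGroup (fun ν => ∏ i, ∫ x, f i x ∂(ν : Measure E))
    (continuous_finsetProd _ fun i _ =>
      ProbabilityMeasure.continuous_integral_boundedContinuousFunction (f i))
    (∏ i, ‖f i‖) fun ν => (norm_prod _ _).trans_le <| Finset.prod_le_prod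
      (fun _ _ => norm_nonneg _) fun i _ => (f i).norm_integral_le_norm (μ := (ν : Measure E))

end RandomMeasures

/-- Sznitman's equivalence: for exchangeable particle systems on a Polish space,
chaoticity (asymptotic factorization of finite-dimensional moments, with limit law
`μ`) is equivalent to convergence in distribution of the empirical measures, viewed
as random elements of the space of probability measures with the topology of weak
convergence, to the deterministic limit `μ`. -/
theorem chaoticity_iff_empirical_measure_convergence
    {E Ω : Type*} [TopologicalSpace E] [PolishSpace E]
    [MeasurableSpace E] [BorelSpace E]
    [MeasurableSpace Ω] (P : Measure Ω) [IsProbabilityMeasure P]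
    (μ : ProbabilityMeasure E)
    (X : (n : ℕ) → Fin (n + 1) → Ω → E)
    (hmeas : ∀ n i, Measurable (X n i))
    (hexch : ∀ n (σ : Equiv.Perm (Fin (n + 1))),
      Measure.map (fun ω => fun i => X n (σ i) ω) P =
      Measure.map (fun ω => fun i => X n i ω) P) :
    (∀ (k : ℕ) (f : Fin k → BoundedContinuousFunction E ℝ),
        Tendsto
          (fun n : ℕ =>
            ∫ ω, ∏ i : Fin k, f i (X (k + n) (Fin.castLE (by omega) i) ω) ∂P)
          atTop (nhds (∏ i : Fin k, ∫ x, f i x ∂(μ : Measure E)))) ↔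
    (∀ Φ : BoundedContinuousFunction (ProbabilityMeasure E) ℝ,
        Tendsto (fun n : ℕ => ∫ ω, Φ (empiricalMeasure (fun i => X n i ω)) ∂P)
          atTop (nhds (Φ μ))) := by
  have hchaos : ∀ k (f : Fin k → E →ᵇ ℝ), _ ↔ _ := fun k f =>
    Exchangeable.tendsto_integral_prod_iff_tendsto_integral_prod_integral_empiricalMeasure
      (P := P) hexch hmeas f (φ := fun n => Fin.castLE (Nat.le_succ_of_le (Nat.le_add_right k n)))
      (fun n => Fin.castLE_injective _) (∏ i, ∫ x, f i x ∂(μ : Measure E))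
  have hmeasΦ : ∀ n {Φ : ProbabilityMeasure E → ℝ}, Continuous Φ →
      Measurable fun ω => Φ (empiricalMeasure fun i => X n i ω) :=
    fun n _ hΦ => hΦ.measurable_comp_empiricalMeasure (hmeas n)
  refine ⟨fun h Φ => ?_, fun h k f => (hchaos k f).2 (h (prodIntegral f))⟩
  refine tendsto_integral_comp_of_forall_tendstoInMeasure_integral (fun g => ?_) Φ
    fun n => (hmeasΦ n Φ.continuous).aestronglyMeasurable
  have hmoments : ∀ k, Tendsto (fun n => ∫ ω, (∫ x, g x
      ∂(empiricalMeasure (fun i => X n i ω) : Measure E)) ^ k ∂P) atTop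
      (𝓝 ((∫ x, g x ∂(μ : Measure E)) ^ k)) := fun k => by
    simpa [Fin.prod_const] using (hchaos k fun _ => g).1 (h k fun _ => g)
  have hbound : ∀ n, MemLp (fun ω => ∫ x, g x
      ∂(empiricalMeasure (fun i => X n i ω) : Measure E)) 2 P := fun n =>
    .of_bound (hmeasΦ n (ProbabilityMeasure.continuous_integral_boundedContinuousFunction g)
      ).aestronglyMeasurable ‖g‖ (ae_of_all _ fun ω => g.norm_integral_le_norm (μ := _))
  exact tendstoInMeasure_const_of_tendsto_moments hbound (by simpa using hmoments 1) (hmoments 2)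
end
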